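/- arXiv:2010.05951 — 6 statements merged into one kernel-verified Lean document; each statement's English description precedes it below -/
import Mathlib

section
/- Let H be a real separable Hilbert space, S : H × H → ℝ a continuous symmetric bilinear form with induced map 𝒮 : H → H* given by (𝒮u)(v) = S(u,v), and let φ be a nonzero continuous linear functional on H which is not a pure limit point of ran(𝒮). If there exists u ∈ H with 𝒮u = φ and φ(u) ≤ 0, then MI^φ(S) = MI(S) − 1; otherwise MI^φ(S) = MI(S). -/
/-!
Always `MI(S) ≤ MI^φ(S) + 1`, since a maximal negative definite subspace meets `ker φ` in
codimension at most one, and `MI^φ(S) ≤ MI(S)`.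

If `𝒮u = φ` with `φ(u) ≤ 0`, then `u` is `S`-orthogonal to `ker φ` and `S(u,u) ≤ 0`. Tilting it to
`v = u - εz` with `φ(z) = 1` makes `S(v,v) ≤ -ε`, while the coupling `S(v,w) = -ε S(z,w)` with a
maximal negative subspace `W ≤ ker φ` is of order `ε`; as `W` is finite-dimensional, `-S` is
coercive on it, so for small `ε` the space `W ⊕ ℝv` is still negative definite and `MI^φ < MI`.

Otherwise there is `u` with `φ(u) ≠ 0` and `𝒮u = aφ`, `a φ(u) ≥ 0`: either `𝒮u = φ` with
`φ(u) > 0`, or `φ ∉ closure (ran 𝒮) = (ker 𝒮)ᗮ` (via the Riesz map) and `𝒮u = 0`. The projection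
`x ↦ x - (φ(x)/φ(u)) u` onto `ker φ` satisfies `S(Px,Px) = S(x,x) - aφ(u)(φ(x)/φ(u))² ≤ S(x,x)`,
so it maps every negative definite subspace injectively to one inside `ker φ`.
-/

/-- The Morse index of the continuous bilinear form `S` restricted to the subspace `G`:
the supremum of dimensions of subspaces of `G` on which `S` is negative definite. -/
noncomputable def morseIndexOn {H : Type*} [NormedAddCommGroup H] [InnerProductSpace ℝ H]
    (S : H →L[ℝ] H →L[ℝ] ℝ) (G : Submodule ℝ H) : ℕ :=
  sSup {n : ℕ | ∃ W : Submodule ℝ H, W ≤ G ∧ Module.finrank ℝ W = n ∧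
    ∀ u ∈ W, u ≠ 0 → S u u < 0}

/-- The (unconstrained) Morse index `MI(S)`. -/
noncomputable def morseIndex {H : Type*} [NormedAddCommGroup H] [InnerProductSpace ℝ H]
    (S : H →L[ℝ] H →L[ℝ] ℝ) : ℕ :=
  morseIndexOn S ⊤

open Module Submodule

section LinearAlgebra

variable {K V : Type*} [Field K] [AddCommGroup V] [Module K V]

theorem finrank_le_finrank_inf_ker_add_one (φ : V →ₗ[K] K) (W : Submodule K V)
    [FiniteDimensional K W] :
    finrank K W ≤ finrank K (W ⊓ LinearMap.ker φ : Submodule K V) + 1 := by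
  set ψ := φ.comp W.subtype
  have hrange : finrank K (LinearMap.range ψ) ≤ 1 := by
    simpa using (LinearMap.range ψ).finrank_le
  have hker : finrank K (LinearMap.ker ψ) = finrank K (W ⊓ LinearMap.ker φ : Submodule K V) := by
    rw [LinearMap.ker_comp, ← finrank_map_subtype_eq, map_comap_subtype]
  have := ψ.finrank_range_add_finrank_ker
  omega

theorem finrank_sup_span_singleton_of_notMem {W : Submodule K V} [FiniteDimensional K W] {v : V}
    (hv : v ∉ W) : finrank K (W ⊔ span K {v} : Submodule K V) = finrank K W + 1 := by
  have hv0 : v ≠ 0 := fun h => hv (h ▸ W.zero_mem)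
  have := finrank_sup_add_finrank_inf_eq W (span K {v})
  rwa [disjoint_iff.1 (disjoint_span_singleton_of_notMem hv), finrank_bot, add_zero,
    finrank_span_singleton hv0] at this

end LinearAlgebra

section

variable {H : Type*} [NormedAddCommGroup H] [InnerProductSpace ℝ H] {S : H →L[ℝ] H →L[ℝ] ℝ}

def IsNegDefOn (S : H →L[ℝ] H →L[ℝ] ℝ) (W : Submodule ℝ H) : Prop :=
  ∀ u ∈ W, u ≠ 0 → S u u < 0

theorem isNegDefOn_bot : IsNegDefOn S ⊥ := fun _ hu hu0 => absurd ((mem_bot ℝ).1 hu) hu0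

section MorseIndex

variable (hfin : BddAbove {n : ℕ | ∃ W : Submodule ℝ H, finrank ℝ W = n ∧ IsNegDefOn S W})
include hfin

theorem bddAbove_morseIndexOn (G : Submodule ℝ H) :
    BddAbove {n : ℕ | ∃ W ≤ G, finrank ℝ W = n ∧ IsNegDefOn S W} :=
  hfin.mono <| by rintro _ ⟨W, -, hW⟩; exact ⟨W, hW⟩

theorem le_morseIndexOn {G W : Submodule ℝ H} (hWG : W ≤ G) (hW : IsNegDefOn S W) :
    finrank ℝ W ≤ morseIndexOn S G :=
  le_csSup (bddAbove_morseIndexOn hfin G) ⟨W, hWG, rfl, hW⟩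

theorem exists_finrank_eq_morseIndexOn (G : Submodule ℝ H) :
    ∃ W ≤ G, IsNegDefOn S W ∧ finrank ℝ W = morseIndexOn S G ∧ FiniteDimensional ℝ W := by
  have h0 : 0 ∈ {n : ℕ | ∃ W ≤ G, finrank ℝ W = n ∧ IsNegDefOn S W} :=
    ⟨⊥, bot_le, finrank_bot ℝ H, isNegDefOn_bot⟩
  obtain ⟨W, hWG, hWn, hW⟩ := Nat.sSup_mem ⟨0, h0⟩ (bddAbove_morseIndexOn hfin G)
  rcases Nat.eq_zero_or_pos (finrank ℝ W) with hW0 | hpos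
  · exact ⟨⊥, bot_le, isNegDefOn_bot, by rw [finrank_bot, ← hW0, hWn]; rfl, inferInstance⟩
  · exact ⟨W, hWG, hW, hWn, FiniteDimensional.of_finrank_pos hpos⟩

theorem morseIndexOn_le_of_map {G G' : Submodule ℝ H} (P : H →ₗ[ℝ] H) (hPG : ∀ x ∈ G, P x ∈ G')
    (hPS : ∀ x ∈ G, S (P x) (P x) ≤ S x x) : morseIndexOn S G ≤ morseIndexOn S G' := by
  obtain ⟨W, hWG, hW, hWn, -⟩ := exists_finrank_eq_morseIndexOn hfin G
  have hinj : Function.Injective (P.domRestrict W) := by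
    rw [← LinearMap.ker_eq_bot, LinearMap.ker_eq_bot']
    intro w hw
    by_contra hw0
    have := hPS w (hWG w.2)
    rw [show P w = 0 from hw, map_zero] at this
    exact (hW w w.2 (by simpa using hw0)).not_ge this
  rw [← hWn, ← LinearMap.finrank_range_of_inj hinj]
  refine le_morseIndexOn hfin ?_ ?_
  · rintro _ ⟨w, rfl⟩
    exact hPG w (hWG w.2)
  · rintro _ ⟨w, rfl⟩ hx
    have hw : (w : H) ≠ 0 := fun h => hx (by simp [h])
    exact (hPS w (hWG w.2)).trans_lt (hW w w.2 hw)

theorem morseIndexOn_mono {G G' : Submodule ℝ H} (hGG' : G ≤ G') :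
    morseIndexOn S G ≤ morseIndexOn S G' :=
  morseIndexOn_le_of_map hfin LinearMap.id (fun _ hx => hGG' hx) fun _ _ => le_rfl

theorem morseIndex_le_morseIndexOn_ker_add_one (φ : H →ₗ[ℝ] ℝ) :
    morseIndex S ≤ morseIndexOn S (LinearMap.ker φ) + 1 := by
  obtain ⟨W, -, hW, hWn, _⟩ := exists_finrank_eq_morseIndexOn hfin ⊤
  have hWφ : finrank ℝ (W ⊓ LinearMap.ker φ : Submodule ℝ H) ≤ morseIndexOn S (LinearMap.ker φ) :=
    le_morseIndexOn hfin inf_le_right fun x hx => hW x hx.1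
  have := finrank_le_finrank_inf_ker_add_one φ W
  rw [morseIndex, ← hWn]
  omega

end MorseIndex

namespace IsNegDefOn

variable {W : Submodule ℝ H}

theorem exists_pos_mul_norm_sq_le [FiniteDimensional ℝ W] (hW : IsNegDefOn S W) :
    ∃ c > 0, ∀ w ∈ W, c * ‖w‖ ^ 2 ≤ -S w w := by
  obtain ⟨c, hc, hsphere⟩ : ∃ c > 0, ∀ y ∈ Metric.sphere (0 : W) 1, c ≤ -S y y := by
    rcases (Metric.sphere (0 : W) 1).eq_empty_or_nonempty with h | h
    · exact ⟨1, one_pos, by simp [h]⟩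
    have hcont : Continuous fun y : W => -S y y := by fun_prop
    obtain ⟨y₀, hy₀, hmin⟩ := (isCompact_sphere (0 : W) 1).exists_isMinOn h hcont.continuousOn
    have hy₀ne : (y₀ : H) ≠ 0 := by
      rw [mem_sphere_zero_iff_norm] at hy₀
      exact fun h => by norm_num [show y₀ = 0 from Subtype.ext h] at hy₀
    exact ⟨-S y₀ y₀, neg_pos.2 (hW y₀ y₀.2 hy₀ne), hmin⟩
  refine ⟨c, hc, fun w hw => ?_⟩
  rcases eq_or_ne w 0 with rfl | hw0
  · simp
  have hnorm : 0 < ‖w‖ := norm_pos_iff.2 hw0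
  have hy := hsphere (‖w‖⁻¹ • ⟨w, hw⟩) (by
    rw [mem_sphere_zero_iff_norm, norm_smul, norm_inv, norm_norm, coe_norm]
    exact inv_mul_cancel₀ hnorm.ne')
  simp only [coe_smul, map_smul, smul_apply, smul_eq_mul] at hy
  rw [show S w w = ‖w‖ ^ 2 * (‖w‖⁻¹ * (‖w‖⁻¹ * S w w)) by field_simp]
  nlinarith [sq_nonneg ‖w‖]

theorem exists_sq_le_mul_neg_apply_self [FiniteDimensional ℝ W] (hW : IsNegDefOn S W)
    (ℓ : H →L[ℝ] ℝ) : ∃ C ≥ 0, ∀ w ∈ W, ℓ w ^ 2 ≤ C * -S w w := by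
  obtain ⟨c, hc, hcoer⟩ := hW.exists_pos_mul_norm_sq_le
  refine ⟨‖ℓ‖ ^ 2 / c, by positivity, fun w hw => ?_⟩
  calc ℓ w ^ 2 ≤ (‖ℓ‖ * ‖w‖) ^ 2 := by
        rw [← sq_abs]; exact pow_le_pow_left₀ (abs_nonneg _) (ℓ.le_opNorm w) 2
    _ = ‖ℓ‖ ^ 2 / c * (c * ‖w‖ ^ 2) := by field_simp
    _ ≤ ‖ℓ‖ ^ 2 / c * -S w w := by gcongr; exact hcoer w hw

end IsNegDefOn

section Symmetric

variable (hsym : ∀ u v : H, S u v = S v u)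
include hsym

theorem isNegDefOn_sup_span_singleton {W : Submodule ℝ H} {v : H}
    (hv : S v v < 0) (hvW : ∀ w ∈ W, w ≠ 0 → S v w ^ 2 < S v v * S w w) :
    IsNegDefOn S (W ⊔ span ℝ {v}) := by
  intro x hx hx0
  obtain ⟨w, hw, _, ht, rfl⟩ := mem_sup.1 hx
  obtain ⟨t, rfl⟩ := mem_span_singleton.1 ht
  have hexpand : S (w + t • v) (w + t • v) = S v v * t ^ 2 + 2 * S v w * t + S w w := by
    simp only [map_add, map_smul, add_apply, smul_apply, smul_eq_mul, hsym w v]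
    ring
  rw [hexpand]
  rcases eq_or_ne w 0 with rfl | hw0
  · have ht0 : t ≠ 0 := by rintro rfl; simp at hx0
    simp only [map_zero, mul_zero, zero_mul, add_zero]
    exact mul_neg_of_neg_of_pos hv (sq_pos_of_ne_zero ht0)
  · -- a negative leading coefficient and a negative discriminant
    nlinarith [hvW w hw hw0, sq_nonneg (S v v * t + S v w)]

theorem exists_apply_self_neg_sq_apply_lt {φ : H →L[ℝ] ℝ} (hφ : φ ≠ 0) {u : H} (hu : S u = φ)
    (hφu : φ u ≤ 0) {W : Submodule ℝ H} [FiniteDimensional ℝ W]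
    (hWφ : W ≤ LinearMap.ker (φ : H →ₗ[ℝ] ℝ)) (hW : IsNegDefOn S W) :
    ∃ v, S v v < 0 ∧ ∀ w ∈ W, w ≠ 0 → S v w ^ 2 < S v v * S w w := by
  obtain ⟨z, hz⟩ := LinearMap.surjective (by exact_mod_cast hφ : (φ : H →ₗ[ℝ] ℝ) ≠ 0) 1
  replace hz : φ z = 1 := hz
  obtain ⟨C, hC, hCW⟩ := hW.exists_sq_le_mul_neg_apply_self (S z)
  set ε := (C + |S z z| + 1)⁻¹
  have hε : 0 < ε := by positivity
  have hεC : ε * C + ε * |S z z| < 1 := by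
    rw [← mul_add, inv_mul_lt_one₀ (by positivity)]
    linarith
  have hvv : S (u - ε • z) (u - ε • z) ≤ -ε := by
    have hq : ε * S z z ≤ 1 := by nlinarith [le_abs_self (S z z), mul_nonneg hε.le hC]
    simp only [map_sub, map_smul, sub_apply, smul_apply, smul_eq_mul, hsym z u, hu, hz]
    nlinarith [mul_le_mul_of_nonneg_left hq hε.le]
  refine ⟨u - ε • z, hvv.trans_lt (neg_neg_of_pos hε), fun w hw hw0 => ?_⟩
  have hvw : S (u - ε • z) w = -(ε * S z w) := by
    simp [hu, show φ w = 0 from hWφ hw]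
  have hww := hW w hw hw0
  calc S (u - ε • z) w ^ 2 = ε ^ 2 * S z w ^ 2 := by rw [hvw]; ring
    _ ≤ ε ^ 2 * (C * -S w w) := by gcongr; exact hCW w hw
    _ = ε * C * (ε * -S w w) := by ring
    _ < 1 * (ε * -S w w) := by
      gcongr
      · exact mul_pos hε (neg_pos.2 hww)
      · nlinarith [abs_nonneg (S z z)]
    _ = ε * -S w w := one_mul _
    _ ≤ S (u - ε • z) (u - ε • z) * S w w := by nlinarith

theorem morseIndexOn_ker_add_one_le_morseIndex
    (hfin : BddAbove {n : ℕ | ∃ W : Submodule ℝ H, finrank ℝ W = n ∧ IsNegDefOn S W})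
    {φ : H →L[ℝ] ℝ} (hφ : φ ≠ 0) {u : H} (hu : S u = φ) (hφu : φ u ≤ 0) :
    morseIndexOn S (LinearMap.ker (φ : H →ₗ[ℝ] ℝ)) + 1 ≤ morseIndex S := by
  obtain ⟨W, hWφ, hW, hWn, _⟩ := exists_finrank_eq_morseIndexOn hfin _
  obtain ⟨v, hv, hvW⟩ := exists_apply_self_neg_sq_apply_lt hsym hφ hu hφu hWφ hW
  have hvW' : v ∉ W := fun hv' => by
    have hv0 : v ≠ 0 := by rintro rfl; simp at hv
    exact (hvW v hv' hv0).ne (sq _)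
  rw [← hWn, ← finrank_sup_span_singleton_of_notMem hvW']
  exact le_morseIndexOn hfin le_top (isNegDefOn_sup_span_singleton hsym hv hvW)

theorem apply_sub_smul_self {φ : H →L[ℝ] ℝ} {u : H} {a : ℝ} (hu : S u = a • φ) (x : H) (s : ℝ) :
    S (x - s • u) (x - s • u) = S x x - 2 * s * a * φ x + s ^ 2 * a * φ u := by
  simp only [map_sub, map_smul, sub_apply, smul_apply, smul_eq_mul, hsym x u, hu]
  ring

theorem morseIndex_le_morseIndexOn_ker
    (hfin : BddAbove {n : ℕ | ∃ W : Submodule ℝ H, finrank ℝ W = n ∧ IsNegDefOn S W})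
    {φ : H →L[ℝ] ℝ} {u : H} {a : ℝ} (hu : S u = a • φ) (hφu : φ u ≠ 0) (ha : 0 ≤ a * φ u) :
    morseIndex S ≤ morseIndexOn S (LinearMap.ker (φ : H →ₗ[ℝ] ℝ)) := by
  let P : H →ₗ[ℝ] H := LinearMap.id - (φ u)⁻¹ • (φ : H →ₗ[ℝ] ℝ).smulRight u
  have hP : ∀ x, P x = x - (φ x / φ u) • u := fun x => by
    simp [P, div_eq_inv_mul, smul_smul]
  refine morseIndexOn_le_of_map hfin P (fun x _ => ?_) fun x _ => ?_
  · simp [hP, field]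
  · obtain ⟨s, hs, hφx⟩ : ∃ s, φ x / φ u = s ∧ φ x = s * φ u := ⟨_, rfl, by field_simp⟩
    rw [hP, apply_sub_smul_self hsym hu, hs, hφx]
    nlinarith [mul_nonneg ha (sq_nonneg s)]

open InnerProductSpace in
theorem exists_apply_eq_zero_of_notMem_closure_range [CompleteSpace H] {φ : H →L[ℝ] ℝ}
    (hφ : φ ∉ closure (Set.range S)) : ∃ u, S u = 0 ∧ φ u ≠ 0 := by
  by_contra! hker
  let A : H →L[ℝ] H := (toDual ℝ H).symm.toContinuousLinearEquiv.toContinuousLinearMap ∘L S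
  have hA : ∀ u v, inner ℝ (A u) v = S u v := fun u v => toDual_symm_apply
  have hAadj : A = ContinuousLinearMap.adjoint A :=
    (ContinuousLinearMap.eq_adjoint_iff A A).2 fun u v => by rw [hA, real_inner_comm, hA, hsym]
  have hφA : (toDual ℝ H).symm φ ∈ A.kerᗮ := fun y hy => by
    rw [real_inner_comm, toDual_symm_apply]
    refine hker y (ContinuousLinearMap.ext fun v => ?_)
    have hAy : A y = 0 := hy
    rw [← hA, hAy, inner_zero_left]
    rfl
  rw [ContinuousLinearMap.orthogonal_ker, ← hAadj] at hφA
  refine hφ ?_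
  simpa using map_mem_closure (toDual ℝ H).continuous hφA (by
    rintro _ ⟨u, rfl⟩
    exact ⟨u, by simp [A]⟩)

end Symmetric

end

theorem morse_index_with_one_constraint_general
    {H : Type*} [NormedAddCommGroup H] [InnerProductSpace ℝ H] [CompleteSpace H]
    (S : H →L[ℝ] H →L[ℝ] ℝ) (hsym : ∀ u v : H, S u v = S v u)
    -- MI(S) is finite:
    (hfin : BddAbove {n : ℕ | ∃ W : Submodule ℝ H, Module.finrank ℝ W = n ∧
      ∀ u ∈ W, u ≠ 0 → S u u < 0})
    (φ : H →L[ℝ] ℝ) (hφ : φ ≠ 0)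
    -- φ is not a pure limit point of ran(𝒮):
    (hnotpure : ¬ (φ ∈ closure (Set.range fun u : H => S u) ∧
      φ ∉ Set.range fun u : H => S u)) :
    ((∃ u : H, S u = φ ∧ φ u ≤ 0) →
        morseIndexOn S (LinearMap.ker (φ : H →ₗ[ℝ] ℝ)) = morseIndex S - 1) ∧
    (¬ (∃ u : H, S u = φ ∧ φ u ≤ 0) →
        morseIndexOn S (LinearMap.ker (φ : H →ₗ[ℝ] ℝ)) = morseIndex S) := by
  have hle := morseIndexOn_mono hfin (le_top : LinearMap.ker (φ : H →ₗ[ℝ] ℝ) ≤ ⊤)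
  have hdrop := morseIndex_le_morseIndexOn_ker_add_one hfin (φ : H →ₗ[ℝ] ℝ)
  refine ⟨fun ⟨u, hu, hφu⟩ => ?_, fun hnex => le_antisymm hle ?_⟩
  · have := morseIndexOn_ker_add_one_le_morseIndex hsym hfin hφ hu hφu
    omega
  by_cases hran : φ ∈ Set.range S
  · obtain ⟨u, hu⟩ := hran
    have hφu : 0 < φ u := not_le.1 fun h => hnex ⟨u, hu, h⟩
    exact morseIndex_le_morseIndexOn_ker hsym hfin (a := 1) (by rw [hu, one_smul]) hφu.ne'
      (by rw [one_mul]; exact hφu.le)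
  · obtain ⟨u, hu, hφu⟩ :=
      exists_apply_eq_zero_of_notMem_closure_range hsym fun h => hnotpure ⟨h, hran⟩
    exact morseIndex_le_morseIndexOn_ker hsym hfin (a := 0) (by rw [hu, zero_smul]) hφu
      (by rw [zero_mul])

theorem morse_index_with_one_constraint
    {H : Type*} [NormedAddCommGroup H] [InnerProductSpace ℝ H] [CompleteSpace H]
    [TopologicalSpace.SeparableSpace H]
    (S : H →L[ℝ] H →L[ℝ] ℝ) (hsym : ∀ u v : H, S u v = S v u)
    -- MI(S) is finite:
    (hfin : BddAbove {n : ℕ | ∃ W : Submodule ℝ H, Module.finrank ℝ W = n ∧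
      ∀ u ∈ W, u ≠ 0 → S u u < 0})
    (φ : H →L[ℝ] ℝ) (hφ : φ ≠ 0)
    -- φ is not a pure limit point of ran(𝒮):
    (hnotpure : ¬ (φ ∈ closure (Set.range fun u : H => S u) ∧
      φ ∉ Set.range fun u : H => S u)) :
    ((∃ u : H, S u = φ ∧ φ u ≤ 0) →
        morseIndexOn S (LinearMap.ker (φ : H →ₗ[ℝ] ℝ)) = morseIndex S - 1) ∧
    (¬ (∃ u : H, S u = φ ∧ φ u ≤ 0) →
        morseIndexOn S (LinearMap.ker (φ : H →ₗ[ℝ] ℝ)) = morseIndex S) :=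
  morse_index_with_one_constraint_general S hsym hfin φ hφ hnotpure
end

section
/- Let T₀ be the unique positive solution of coth T = T and T₁ the smallest positive solution of cos x + x·sin x = 0. Then T₀ < π/2 < T₁, and consequently for every integer n ≥ 2 one has 1/(1 + T₁²/(n−1)) < 1/(1 + T₀²/(n+1)); i.e., there exist 0 < a < b < 1 such that every r ∈ (a,b) satisfies both (n+1)(1−r²) > r²·T₀² and (n−1)(1−r²) < r²·T₁². -/
open Real

theorem cylinder_index_window
    (T₀ T₁ : ℝ)
    (hT₀ : 0 < T₀ ∧ Real.cosh T₀ = T₀ * Real.sinh T₀)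
    (hT₁ : IsLeast {x : ℝ | 0 < x ∧ Real.cos x + x * Real.sin x = 0} T₁) :
    T₀ < π / 2 ∧ π / 2 < T₁ ∧
    ∀ n : ℕ, 2 ≤ n →
      (1 / (1 + T₁ ^ 2 / ((n : ℝ) - 1)) < 1 / (1 + T₀ ^ 2 / ((n : ℝ) + 1))) ∧
      ∃ a b : ℝ, 0 < a ∧ a < b ∧ b < 1 ∧
        ∀ r : ℝ, a < r → r < b →
          ((n : ℝ) + 1) * (1 - r ^ 2) > r ^ 2 * T₀ ^ 2 ∧
          ((n : ℝ) - 1) * (1 - r ^ 2) < r ^ 2 * T₁ ^ 2 := by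
  obtain ⟨hT₀pos, hT₀eq⟩ := hT₀
  obtain ⟨⟨hT₁pos, hT₁eq⟩, _⟩ := hT₁
  have hπ : (3.141592 : ℝ) < π := Real.pi_gt_d6
  -- numeric: exp π > 19
  have hexp : (19 : ℝ) < Real.exp π := by
    have he : (2.7:ℝ) < Real.exp 1 := by linarith [Real.exp_one_gt_d9]
    calc (19:ℝ) < Real.exp 1 ^ 3 := by
          have h3 : (2.7:ℝ)^3 < Real.exp 1 ^ 3 := by
            exact pow_lt_pow_left₀ he (by norm_num) (by norm_num)
          nlinarith [h3]
      _ = Real.exp 3 := by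
          rw [← Real.exp_nat_mul]; norm_num
      _ < Real.exp π := Real.exp_lt_exp.mpr (by linarith)
  -- cosh(π/2) < (π/2) sinh(π/2)
  have hcs : Real.cosh (π/2) < (π/2) * Real.sinh (π/2) := by
    rw [Real.cosh_eq, Real.sinh_eq]
    have h1 : Real.exp (π/2) * Real.exp (-(π/2)) = 1 := by
      rw [← Real.exp_add]; norm_num
    have h2 : Real.exp (π/2) ^ 2 = Real.exp π := by
      rw [← Real.exp_nat_mul]; congr 1; push_cast; ring
    have h3 : 0 < Real.exp (-(π/2)) := Real.exp_pos _
    have h4 : 0 < Real.exp (π/2) := Real.exp_pos _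
    nlinarith [h1, h2, h3, h4, hexp, hπ]
  have hA : T₀ < π / 2 := by
    by_contra h
    push_neg at h
    have hs0 : 0 < Real.sinh T₀ := Real.sinh_pos_iff.mpr hT₀pos
    have hsp : 0 < Real.sinh (π/2) := Real.sinh_pos_iff.mpr (by linarith)
    have hmono : Real.sinh (π/2 - T₀) ≤ 0 := by
      have h0 : Real.sinh (π/2 - T₀) ≤ Real.sinh 0 := Real.sinh_le_sinh.mpr (by linarith)
      simpa using h0
    rw [Real.sinh_sub] at hmono
    -- sinh(π/2) cosh T₀ ≤ cosh(π/2) sinh T₀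
    have key : Real.sinh (π/2) * Real.cosh T₀ ≤ Real.cosh (π/2) * Real.sinh T₀ := by linarith
    rw [hT₀eq] at key
    nlinarith [mul_pos hsp hs0]
  have hB : π / 2 < T₁ := by
    by_contra h
    push_neg at h
    have hcos : 0 ≤ Real.cos T₁ :=
      Real.cos_nonneg_of_mem_Icc ⟨by linarith, h⟩
    have hsin : 0 < Real.sin T₁ :=
      Real.sin_pos_of_pos_of_lt_pi hT₁pos (by linarith)
    nlinarith [mul_pos hT₁pos hsin]
  refine ⟨hA, hB, fun n hn => ?_⟩
  have hN : (2:ℝ) ≤ (n:ℝ) := by exact_mod_cast hn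
  have hT01 : T₀ < T₁ := by linarith
  have hsq : T₀ ^ 2 < T₁ ^ 2 := by nlinarith
  have hN1 : (0:ℝ) < (n:ℝ) - 1 := by linarith
  have hN2 : (0:ℝ) < (n:ℝ) + 1 := by linarith
  have hT0sq : 0 < T₀ ^ 2 := by positivity
  have hT1sq : 0 < T₁ ^ 2 := by nlinarith
  have hda : (0:ℝ) < (n:ℝ) - 1 + T₁ ^ 2 := by linarith
  have hdb : (0:ℝ) < (n:ℝ) + 1 + T₀ ^ 2 := by linarith
  constructor
  · apply one_div_lt_one_div_of_lt (by positivity)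
    have : T₀ ^ 2 / ((n:ℝ) + 1) < T₁ ^ 2 / ((n:ℝ) - 1) := by
      rw [div_lt_div_iff₀ hN2 hN1]
      nlinarith
    linarith
  · set A := ((n:ℝ) - 1) / ((n:ℝ) - 1 + T₁ ^ 2) with hAdef
    set B := ((n:ℝ) + 1) / ((n:ℝ) + 1 + T₀ ^ 2) with hBdef
    have hApos : 0 < A := by positivity
    have hBpos : 0 < B := by positivity
    have hAB : A < B := by
      rw [hAdef, hBdef, div_lt_div_iff₀ hda hdb]
      nlinarith
    have hB1 : B < 1 := by
      rw [hBdef, div_lt_one hdb]; linarith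
    refine ⟨Real.sqrt A, Real.sqrt B, Real.sqrt_pos.mpr hApos, ?_, ?_, ?_⟩
    · exact Real.sqrt_lt_sqrt hApos.le hAB
    · rw [show (1:ℝ) = Real.sqrt 1 by simp]
      exact Real.sqrt_lt_sqrt hBpos.le hB1
    · intro r hra hrb
      have hrpos : 0 < r := lt_trans (Real.sqrt_pos.mpr hApos) hra
      have hr2a : A < r ^ 2 := by
        calc A = Real.sqrt A ^ 2 := (Real.sq_sqrt hApos.le).symm
          _ < r ^ 2 := pow_lt_pow_left₀ hra (Real.sqrt_nonneg A) two_ne_zero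
      have hr2b : r ^ 2 < B := by
        calc r ^ 2 < Real.sqrt B ^ 2 := pow_lt_pow_left₀ hrb hrpos.le two_ne_zero
          _ = B := Real.sq_sqrt hBpos.le
      constructor
      · rw [hBdef, lt_div_iff₀ hdb] at hr2b
        ring_nf at hr2b ⊢
        linarith
      · rw [hAdef, div_lt_iff₀ hda] at hr2a
        ring_nf at hr2a ⊢
        linarith
end

section
/- Fix an integer n ≥ 2 and r ∈ (0,1); set T = √(1−r²), s = √(n−1)/r and x = sT. Assume cos x + x·sin x ≠ 0 and set c = r²/((n−1)(x sin x + cos x)) and u(t) = c·cos(s t) − r²/(n−1). Then: (i) u''(t) + s²·u(t) = −1 for all t ∈ ℝ; (ii) T·u'(T) = u(T) and T·u'(−T) = −u(−T); (iii) ((n−1)/r²)·∫_{−T}^{T} u(t) dt = −2(u'(T) + T); and (iv) s·(u'(T) + T) = x − sin x/(x sin x + cos x). -/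
/-!
The function `u(t) = c cos(s t) - k` with `k = r² / (n - 1) = 1 / s²` solves `u'' + s² u = -1`.
Since `u` is even and `u'` odd, both Robin conditions at `±T` reduce to `c (x sin x + cos x) = k`,
which is how `c` is chosen. The integral over `[-T, T]` is `2 c sin x / s - 2 T k`, and (iii), (iv)
are algebraic rearrangements of it using `s² k = 1`.
-/

open Real

noncomputable def cosProfile (c s k : ℝ) (t : ℝ) : ℝ := c * cos (s * t) - k

namespace cosProfile

variable (c s k : ℝ)

theorem hasDerivAt (t : ℝ) : HasDerivAt (cosProfile c s k) (-(c * s) * sin (s * t)) t :=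
  ((((hasDerivAt_id t).const_mul s).cos.const_mul c).sub_const k).congr_deriv
    (by simp only [id]; ring)

theorem deriv_eq : deriv (cosProfile c s k) = fun t => -(c * s) * sin (s * t) :=
  funext fun t => (hasDerivAt c s k t).deriv

theorem deriv_deriv_add (t : ℝ) :
    deriv (deriv (cosProfile c s k)) t + s ^ 2 * cosProfile c s k t = -(s ^ 2 * k) := by
  have h := ((((hasDerivAt_id t).const_mul s).sin).const_mul (-(c * s))).deriv
  simp only [id, mul_one] at h
  rw [deriv_eq, h, cosProfile]
  ring

theorem robin_boundary (T : ℝ) (h : c * (s * T * sin (s * T) + cos (s * T)) = k) :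
    T * deriv (cosProfile c s k) T = cosProfile c s k T ∧
      T * deriv (cosProfile c s k) (-T) = -cosProfile c s k (-T) := by
  simp only [deriv_eq, cosProfile, mul_neg, sin_neg, cos_neg]
  exact ⟨by linear_combination -h, by linear_combination h⟩

theorem intervalIntegral_neg_self (hs : s ≠ 0) (T : ℝ) :
    ∫ t in (-T)..T, cosProfile c s k t = 2 * c * sin (s * T) / s - 2 * T * k := by
  have hcos : IntervalIntegrable (fun t => c * cos (s * t)) MeasureTheory.volume (-T) T :=
    (continuous_const.mul (continuous_cos.comp (continuous_const_mul s))).intervalIntegrable _ _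
  simp only [cosProfile]
  rw [intervalIntegral.integral_sub hcos intervalIntegrable_const,
    intervalIntegral.integral_const_mul, intervalIntegral.integral_comp_mul_left cos hs,
    integral_cos, intervalIntegral.integral_const, smul_eq_mul, mul_neg, sin_neg]
  field_simp
  ring

end cosProfile

theorem cylinder_typeI_witness_general
    (n : ℕ) (hn : 2 ≤ n) (r : ℝ) (hr : 0 < r ∧ r < 1)
    (T s x : ℝ)
    (hs : s = Real.sqrt ((n : ℝ) - 1) / r)
    (hx : x = s * T)
    (hne : Real.cos x + x * Real.sin x ≠ 0)
    (c : ℝ) (hc : c = r ^ 2 / (((n : ℝ) - 1) * (x * Real.sin x + Real.cos x)))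
    (u : ℝ → ℝ) (hu : u = fun t => c * Real.cos (s * t) - r ^ 2 / ((n : ℝ) - 1)) :
    (∀ t : ℝ, deriv (deriv u) t + s ^ 2 * u t = -1) ∧
    (T * deriv u T = u T ∧ T * deriv u (-T) = -(u (-T))) ∧
    (((n : ℝ) - 1) / r ^ 2 * ∫ t in (-T)..T, u t) = -2 * (deriv u T + T) ∧
    s * (deriv u T + T) = x - Real.sin x / (x * Real.sin x + Real.cos x) := by
  obtain ⟨k, hk⟩ : ∃ k, k = r ^ 2 / ((n : ℝ) - 1) := ⟨_, rfl⟩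
  have hn1 : (0 : ℝ) < (n : ℝ) - 1 := by
    have : (2 : ℝ) ≤ n := by exact_mod_cast hn
    linarith
  have hr0 : r ≠ 0 := hr.1.ne'
  have hs2 : s ^ 2 = ((n : ℝ) - 1) / r ^ 2 := by rw [hs, div_pow, sq_sqrt hn1.le]
  have hs0 : s ≠ 0 := by rw [hs]; exact div_ne_zero (sqrt_pos.mpr hn1).ne' hr0
  have hsk : s ^ 2 * k = 1 := by rw [hs2, hk]; field_simp
  have hD : x * sin x + cos x ≠ 0 := by rwa [add_comm]
  have hck : c * (x * sin x + cos x) = k := by rw [hc, hk]; field_simp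
  replace hu : u = cosProfile c s k := by rw [hu, hk]; rfl
  subst hu hx
  refine ⟨fun t => by rw [cosProfile.deriv_deriv_add, hsk],
    cosProfile.robin_boundary c s k T hck, ?_, ?_⟩
  · rw [cosProfile.intervalIntegral_neg_self c s k hs0, cosProfile.deriv_eq, ← hs2]
    field_simp
    linear_combination (-T) * hsk
  · rw [cosProfile.deriv_eq]
    field_simp
    linear_combination (-sin (s * T) * s ^ 2) * hck - sin (s * T) * hsk

theorem cylinder_typeI_witness
    (n : ℕ) (hn : 2 ≤ n) (r : ℝ) (hr : 0 < r ∧ r < 1)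
    (T s x : ℝ)
    (hT : T = Real.sqrt (1 - r ^ 2))
    (hs : s = Real.sqrt ((n : ℝ) - 1) / r)
    (hx : x = s * T)
    (hne : Real.cos x + x * Real.sin x ≠ 0)
    (c : ℝ) (hc : c = r ^ 2 / (((n : ℝ) - 1) * (x * Real.sin x + Real.cos x)))
    (u : ℝ → ℝ) (hu : u = fun t => c * Real.cos (s * t) - r ^ 2 / ((n : ℝ) - 1)) :
    (∀ t : ℝ, deriv (deriv u) t + s ^ 2 * u t = -1) ∧
    (T * deriv u T = u T ∧ T * deriv u (-T) = -(u (-T))) ∧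
    (((n : ℝ) - 1) / r ^ 2 * ∫ t in (-T)..T, u t) = -2 * (deriv u T + T) ∧
    s * (deriv u T + T) = x - Real.sin x / (x * Real.sin x + Real.cos x) :=
  cylinder_typeI_witness_general n hn r hr T s x hs hx hne c hc u hu
end

section
/- Fix an integer n ≥ 2 and r ∈ (0,1); set T = √(1−r²), s = √(n−1)/r and x = sT. Assume cos x + x·sin x = 0 and let v(t) = cos(s t). Then: (i) v''(t) + s²·v(t) = 0 for all t ∈ ℝ; (ii) T·v'(T) = v(T) and T·v'(−T) = −v(−T); and (iii) ∫_{−T}^{T} v(t) dt = 2·sin(x)/s ≠ 0. -/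
open Real

theorem cylinder_fredholm_obstruction_witness
    (n : ℕ) (hn : 2 ≤ n) (r : ℝ) (hr : 0 < r ∧ r < 1)
    (T s x : ℝ)
    (hT : T = Real.sqrt (1 - r ^ 2))
    (hs : s = Real.sqrt ((n : ℝ) - 1) / r)
    (hx : x = s * T)
    (heq : Real.cos x + x * Real.sin x = 0)
    (v : ℝ → ℝ) (hv : v = fun t => Real.cos (s * t)) :
    (∀ t : ℝ, deriv (deriv v) t + s ^ 2 * v t = 0) ∧
    (T * deriv v T = v T ∧ T * deriv v (-T) = -(v (-T))) ∧
    ((∫ t in (-T)..T, v t) = 2 * Real.sin x / s ∧ (∫ t in (-T)..T, v t) ≠ 0) := by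
  have hspos : 0 < s := by
    rw [hs]
    apply div_pos _ hr.1
    apply Real.sqrt_pos.mpr
    have : (2:ℝ) ≤ (n:ℝ) := by exact_mod_cast hn
    linarith
  have hdv : deriv v = fun t => -s * Real.sin (s * t) := by
    funext t
    rw [hv]
    have : HasDerivAt (fun t : ℝ => Real.cos (s * t)) (-Real.sin (s * t) * s) t := by
      have h1 : HasDerivAt (fun t : ℝ => s * t) s t := by
        simpa using (hasDerivAt_id t).const_mul s
      exact (Real.hasDerivAt_cos (s * t)).comp t h1
    rw [this.deriv]; ring
  have hdv2 : deriv (deriv v) = fun t => -s * (Real.cos (s * t) * s) := by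
    funext t
    rw [hdv]
    have h1 : HasDerivAt (fun t : ℝ => s * t) s t := by
      simpa using (hasDerivAt_id t).const_mul s
    have : HasDerivAt (fun t : ℝ => -s * Real.sin (s * t)) (-s * (Real.cos (s * t) * s)) t :=
      ((Real.hasDerivAt_sin (s * t)).comp t h1).const_mul (-s)
    rw [this.deriv]
  have hsinx : Real.sin x ≠ 0 := by
    intro h
    have hc : Real.cos x = 0 := by rw [h] at heq; linarith [heq]
    have := Real.sin_sq_add_cos_sq x
    rw [h, hc] at this; norm_num at this
  refine ⟨?_, ⟨?_, ?_⟩, ?_, ?_⟩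
  · intro t
    rw [hdv2, hv]
    ring
  · rw [hdv, hv]
    simp only
    rw [← hx]
    have hxe : T * s = x := by rw [hx]; ring
    linear_combination (-Real.sin x) * hxe - heq
  · rw [hdv, hv]
    simp only [mul_neg, Real.sin_neg, Real.cos_neg]
    rw [← hx]
    have hxe : T * s = x := by rw [hx]; ring
    linear_combination (Real.sin x) * hxe + heq
  · rw [hv]
    rw [intervalIntegral.integral_comp_mul_left (fun t => Real.cos t) (ne_of_gt hspos)]
    rw [integral_cos]
    rw [smul_eq_mul, mul_neg, ← hx, Real.sin_neg]
    field_simp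
    ring
  · rw [hv]
    rw [intervalIntegral.integral_comp_mul_left (fun t => Real.cos t) (ne_of_gt hspos)]
    rw [integral_cos]
    rw [smul_eq_mul, mul_neg, ← hx, Real.sin_neg]
    intro h
    apply hsinx
    have : s⁻¹ * (2 * Real.sin x) = 0 := by linarith [h]
    rcases mul_eq_zero.mp this with h1 | h2
    · exact absurd h1 (by positivity)
    · linarith
end

section
/- Let T > 0 satisfy cosh T = T·sinh T and set c = 1/(T·cosh T), a = c²/4, b = −a·sinh² T, and u(t) = −a·cosh² t + b·(1 − t·tanh t). Then: (i) u''(t) + (2/cosh² t)·u(t) = −c²·cosh² t for all t ∈ ℝ (so that Ju = −1 for the Jacobi operator of the critical catenoid); (ii) T·u'(T) = u(T) and T·u'(−T) = −u(−T) (the Robin condition ∇_η u = u); and (iii) ∫_{−T}^{T} u(t)·cosh²(t) dt < 0 (so the integral of u over the catenoid is negative). -/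
/-!
Write `u = -a cosh² t + b φ(t)` with `φ(t) = 1 - t tanh t`. The function `φ` is the Jacobi field
of the dilations of the catenoid, `φ'' + 2φ / cosh² = 0`, while `(cosh²)'' + 2 = 4 cosh²`; hence
`u'' + 2u / cosh² = -4a cosh² = -c² cosh²`. The defining equation of `T` says exactly `φ(T) = 0`,
and the choice of `b` then makes the Robin condition hold at `T`; it holds at `-T` because `u` is
even. Finally `φ` is even and decreasing on `[0, ∞)`, so `φ ≥ φ(T) = 0` on `[-T, T]`, and
`a > 0 ≥ b` makes `u` negative there.
-/

open Real Set

theorem deriv_neg_eq_neg_deriv_of_even {f : ℝ → ℝ} (hf : ∀ x, f (-x) = f x) (x : ℝ) :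
    deriv f (-x) = -deriv f x := by
  conv_lhs => rw [show f = fun y => f (-y) from funext fun y => (hf y).symm]
  rw [deriv_comp_neg, neg_neg]

namespace Real

theorem hasDerivAt_tanh (t : ℝ) : HasDerivAt tanh (1 / cosh t ^ 2) t := by
  rw [show tanh = fun s => sinh s / cosh s from funext tanh_eq_sinh_div_cosh]
  refine ((hasDerivAt_sinh t).div (hasDerivAt_cosh t) (cosh_pos t).ne').congr_deriv ?_
  rw [← cosh_sq_sub_sinh_sq t]
  ring

theorem hasDerivAt_cosh_sq (t : ℝ) : HasDerivAt (fun s => cosh s ^ 2) (sinh (2 * t)) t := by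
  refine ((hasDerivAt_cosh t).pow 2).congr_deriv ?_
  rw [sinh_two_mul]
  ring

theorem hasDerivAt_sinh_two_mul (t : ℝ) :
    HasDerivAt (fun s => sinh (2 * s)) (2 * cosh (2 * t)) t := by
  refine (((hasDerivAt_id t).const_mul 2).sinh).congr_deriv ?_
  simp only [id]
  ring

theorem hasDerivAt_one_sub_mul_tanh (t : ℝ) :
    HasDerivAt (fun s => 1 - s * tanh s) (-(tanh t + t / cosh t ^ 2)) t := by
  refine ((hasDerivAt_const t (1 : ℝ)).sub ((hasDerivAt_id t).mul (hasDerivAt_tanh t))).congr_deriv ?_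
  simp only [id]
  ring

theorem hasDerivAt_tanh_add_div_cosh_sq (t : ℝ) :
    HasDerivAt (fun s => tanh s + s / cosh s ^ 2) (2 * (1 - t * tanh t) / cosh t ^ 2) t := by
  have hcosh : cosh t ≠ 0 := (cosh_pos t).ne'
  refine ((hasDerivAt_tanh t).add ((hasDerivAt_id t).div ((hasDerivAt_cosh t).pow 2)
    (pow_ne_zero 2 hcosh))).congr_deriv ?_
  simp only [id, Pi.pow_apply, tanh_eq_sinh_div_cosh]
  field_simp
  ring

theorem antitoneOn_one_sub_mul_tanh : AntitoneOn (fun s => 1 - s * tanh s) (Ici 0) := by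
  refine antitoneOn_of_hasDerivWithinAt_nonpos (convex_Ici 0)
    (fun t _ => (hasDerivAt_one_sub_mul_tanh t).continuousAt.continuousWithinAt)
    (fun t _ => (hasDerivAt_one_sub_mul_tanh t).hasDerivWithinAt) fun t ht => ?_
  rw [interior_Ici, mem_Ioi] at ht
  have htanh : 0 ≤ tanh t :=
    (tanh_eq_sinh_div_cosh t).symm ▸ div_nonneg (sinh_nonneg_iff.mpr ht.le) (cosh_pos t).le
  have : 0 ≤ t / cosh t ^ 2 := by positivity
  linarith

theorem one_sub_mul_tanh_nonneg {T t : ℝ} (hTeq : cosh T = T * sinh T) (ht : |t| ≤ T) :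
    0 ≤ 1 - t * tanh t := by
  have hzero : 1 - T * tanh T = 0 := by
    rw [tanh_eq_sinh_div_cosh, mul_div_assoc', ← hTeq, div_self (cosh_pos T).ne', sub_self]
  have habs : |t| * tanh |t| = t * tanh t := by
    rcases abs_choice t with h | h <;> rw [h]
    rw [tanh_neg, neg_mul_neg]
  have hmono := antitoneOn_one_sub_mul_tanh (mem_Ici.mpr (abs_nonneg t))
    (mem_Ici.mpr ((abs_nonneg t).trans ht)) ht
  simp only at hmono
  linarith

end Real

noncomputable def catenoidProfile (a b t : ℝ) : ℝ := -a * cosh t ^ 2 + b * (1 - t * tanh t)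

section catenoidProfile

variable (a b : ℝ)

theorem catenoidProfile_neg (t : ℝ) : catenoidProfile a b (-t) = catenoidProfile a b t := by
  simp only [catenoidProfile, cosh_neg, tanh_neg, neg_mul_neg]

theorem hasDerivAt_catenoidProfile (t : ℝ) :
    HasDerivAt (catenoidProfile a b) (-a * sinh (2 * t) - b * (tanh t + t / cosh t ^ 2)) t := by
  refine (((hasDerivAt_cosh_sq t).const_mul (-a)).add
    ((hasDerivAt_one_sub_mul_tanh t).const_mul b)).congr_deriv ?_
  ring

theorem continuous_catenoidProfile : Continuous (catenoidProfile a b) :=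
  continuous_iff_continuousAt.mpr fun t => (hasDerivAt_catenoidProfile a b t).continuousAt

theorem deriv_catenoidProfile :
    deriv (catenoidProfile a b) = fun t => -a * sinh (2 * t) - b * (tanh t + t / cosh t ^ 2) :=
  funext fun t => (hasDerivAt_catenoidProfile a b t).deriv

theorem hasDerivAt_deriv_catenoidProfile (t : ℝ) :
    HasDerivAt (deriv (catenoidProfile a b))
      (-a * (2 * cosh (2 * t)) - b * (2 * (1 - t * tanh t) / cosh t ^ 2)) t := by
  rw [deriv_catenoidProfile]
  exact ((hasDerivAt_sinh_two_mul t).const_mul (-a)).sub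
    ((hasDerivAt_tanh_add_div_cosh_sq t).const_mul b)

theorem deriv_deriv_catenoidProfile_add (t : ℝ) :
    deriv (deriv (catenoidProfile a b)) t + 2 / cosh t ^ 2 * catenoidProfile a b t
      = -4 * a * cosh t ^ 2 := by
  have hcosh : cosh t ≠ 0 := (cosh_pos t).ne'
  rw [(hasDerivAt_deriv_catenoidProfile a b t).deriv, catenoidProfile, cosh_two_mul]
  field_simp
  linear_combination 2 * a * cosh t ^ 2 * cosh_sq t

theorem catenoidProfile_robin {T : ℝ} (hTeq : cosh T = T * sinh T) :
    T * deriv (catenoidProfile a (-a * sinh T ^ 2)) T = catenoidProfile a (-a * sinh T ^ 2) T := by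
  have hcosh : cosh T ≠ 0 := (cosh_pos T).ne'
  rw [deriv_catenoidProfile, catenoidProfile]
  beta_reduce
  rw [tanh_eq_sinh_div_cosh, sinh_two_mul]
  field_simp
  linear_combination (2 * a * cosh T ^ 3 - a * (cosh T + T * sinh T)) * hTeq
    - a * cosh T ^ 2 * cosh_sq_sub_sinh_sq T

variable {a b}

theorem catenoidProfile_lt_zero {t : ℝ} (ha : 0 < a) (hb : b ≤ 0) (ht : 0 ≤ 1 - t * tanh t) :
    catenoidProfile a b t < 0 := by
  have : 0 < a * cosh t ^ 2 := by positivity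
  have : b * (1 - t * tanh t) ≤ 0 := mul_nonpos_of_nonpos_of_nonneg hb ht
  rw [catenoidProfile]
  linarith

theorem integral_catenoidProfile_mul_cosh_sq_neg {T : ℝ} (hT : 0 < T)
    (hTeq : cosh T = T * sinh T) (ha : 0 < a) (hb : b ≤ 0) :
    ∫ t in (-T)..T, catenoidProfile a b t * cosh t ^ 2 < 0 := by
  have hcont : Continuous fun t => -(catenoidProfile a b t * cosh t ^ 2) :=
    ((continuous_catenoidProfile a b).mul (continuous_cosh.pow 2)).neg
  rw [← neg_pos, ← intervalIntegral.integral_neg]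
  refine intervalIntegral.intervalIntegral_pos_of_pos_on (hcont.intervalIntegrable (-T) T)
    (fun t ht => ?_) (by linarith)
  have hφ := one_sub_mul_tanh_nonneg hTeq (abs_le.mpr ⟨ht.1.le, ht.2.le⟩)
  exact neg_pos.mpr (mul_neg_of_neg_of_pos (catenoidProfile_lt_zero ha hb hφ) (by positivity))

end catenoidProfile

theorem critical_catenoid_typeI_witness
    (T : ℝ) (hT : 0 < T) (hTeq : Real.cosh T = T * Real.sinh T)
    (c a b : ℝ)
    (hc : c = 1 / (T * Real.cosh T))
    (ha : a = c ^ 2 / 4)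
    (hb : b = -a * Real.sinh T ^ 2)
    (u : ℝ → ℝ)
    (hu : u = fun t => -a * Real.cosh t ^ 2 + b * (1 - t * Real.tanh t)) :
    (∀ t : ℝ, deriv (deriv u) t + (2 / Real.cosh t ^ 2) * u t
        = -c ^ 2 * Real.cosh t ^ 2) ∧
    (T * deriv u T = u T ∧ T * deriv u (-T) = -(u (-T))) ∧
    (∫ t in (-T)..T, u t * Real.cosh t ^ 2) < 0 := by
  obtain rfl : u = catenoidProfile a b := hu
  have ha_pos : 0 < a := by
    have : 0 < c := hc ▸ by positivity
    rw [ha]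
    positivity
  have hrobin : T * deriv (catenoidProfile a b) T = catenoidProfile a b T :=
    hb ▸ catenoidProfile_robin a hTeq
  refine ⟨fun t => ?_, ⟨hrobin, ?_⟩, ?_⟩
  · rw [deriv_deriv_catenoidProfile_add, ha]
    ring
  · rw [deriv_neg_eq_neg_deriv_of_even (catenoidProfile_neg a b), catenoidProfile_neg, ← hrobin]
    ring
  · exact integral_catenoidProfile_mul_cosh_sq_neg hT hTeq ha_pos
      (hb ▸ mul_nonpos_of_nonpos_of_nonneg (neg_nonpos.mpr ha_pos.le) (sq_nonneg _))
end

section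
/- Let T > 0 satisfy cosh T = T·sinh T and set a = −tanh² T and u(t) = a·(1 − t·tanh t). Then: (i) u''(t) + (2/cosh² t)·u(t) = 0 for all t ∈ ℝ (so that Ju = 0 for the Jacobi operator of the critical catenoid); (ii) T·u'(T) − u(T) = 1 (the condition ∇_η u − u = 1); and (iii) ∫_{−T}^{T} u(t)·cosh²(t) dt < 0 (so the integral of u over the catenoid is negative). -/
/-!
The function `u` is `a φ` with `φ t = 1 - t tanh t` the Jacobi field generated by dilations of
the catenoid, so `u'' + 2 u / cosh² = 0` for every `a`.
The equation `cosh T = T sinh T` says `T tanh T = 1`; with it, `T φ'(T) - φ(T) = -T²` and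
`∫_{-T}^{T} φ cosh² = T cosh² T / 2 > 0`, while `a = -tanh² T = -1 / T²`.
-/

open Real

lemma Real.hasDerivAt_tanh_s14 (t : ℝ) : HasDerivAt tanh (1 / cosh t ^ 2) t := by
  have h : HasDerivAt (fun x => sinh x / cosh x) _ t :=
    (hasDerivAt_sinh t).div (hasDerivAt_cosh t) (cosh_pos t).ne'
  rw [show tanh = fun x => sinh x / cosh x from funext tanh_eq_sinh_div_cosh]
  refine h.congr_deriv ?_
  rw [← cosh_sq_sub_sinh_sq t]
  ring

/-- The support function `⟨X, ν⟩ / c` of the catenoid `X = c (cosh t cos τ, cosh t sin τ, t)`,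
i.e. the normal part of the dilation field. -/
noncomputable def catenoidSupport (t : ℝ) : ℝ := 1 - t * tanh t

lemma hasDerivAt_catenoidSupport (t : ℝ) :
    HasDerivAt catenoidSupport (-(tanh t + t / cosh t ^ 2)) t := by
  have h : HasDerivAt (fun t => 1 - t * tanh t) _ t :=
    ((hasDerivAt_id' t).mul (hasDerivAt_tanh_s14 t)).const_sub 1
  refine h.congr_deriv ?_
  ring

lemma deriv_catenoidSupport :
    deriv catenoidSupport = fun t => -(tanh t + t / cosh t ^ 2) :=
  funext fun t => (hasDerivAt_catenoidSupport t).deriv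

lemma deriv_deriv_catenoidSupport :
    deriv (deriv catenoidSupport) = fun t => -(2 / cosh t ^ 2) * catenoidSupport t := by
  funext t
  have hc : cosh t ≠ 0 := (cosh_pos t).ne'
  have hcosh_sq : HasDerivAt (fun t => cosh t ^ 2) (2 * cosh t * sinh t) t := by
    simpa using (hasDerivAt_cosh t).fun_pow 2
  have h : HasDerivAt (fun t => -(tanh t + t / cosh t ^ 2)) _ t :=
    ((hasDerivAt_tanh_s14 t).add ((hasDerivAt_id' t).div hcosh_sq (pow_ne_zero 2 hc))).neg
  rw [deriv_catenoidSupport, h.deriv, catenoidSupport, tanh_eq_sinh_div_cosh]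
  field_simp
  ring

lemma mul_tanh_eq_one_of_cosh_eq {T : ℝ} (hT : cosh T = T * sinh T) : T * tanh T = 1 := by
  rw [tanh_eq_sinh_div_cosh, mul_div_assoc', ← hT, div_self (cosh_pos T).ne']

lemma mul_deriv_catenoidSupport_sub_of_cosh_eq {T : ℝ} (hT : cosh T = T * sinh T) :
    T * deriv catenoidSupport T - catenoidSupport T = -T ^ 2 := by
  have hc : cosh T ≠ 0 := (cosh_pos T).ne'
  simp only [deriv_catenoidSupport, catenoidSupport, tanh_eq_sinh_div_cosh]
  field_simp
  linear_combination -(T * sinh T + cosh T) * hT + T ^ 2 * cosh_sq_sub_sinh_sq T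

lemma integral_catenoidSupport_mul_cosh_sq (T : ℝ) :
    ∫ t in (-T)..T, catenoidSupport t * cosh t ^ 2
      = 3 / 2 * (T + sinh T * cosh T) - T * cosh T ^ 2 := by
  let F : ℝ → ℝ := fun t => 3 / 4 * (t + sinh t * cosh t) - t * cosh t ^ 2 / 2
  have hF : ∀ t, HasDerivAt F (catenoidSupport t * cosh t ^ 2) t := by
    intro t
    have hcosh_sq : HasDerivAt (fun t => cosh t ^ 2) (2 * cosh t * sinh t) t := by
      simpa using (hasDerivAt_cosh t).fun_pow 2
    have h : HasDerivAt F _ t :=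
      (((hasDerivAt_id' t).add ((hasDerivAt_sinh t).mul (hasDerivAt_cosh t))).const_mul
        (3 / 4)).sub (((hasDerivAt_id' t).mul hcosh_sq).div_const 2)
    refine h.congr_deriv ?_
    rw [catenoidSupport, tanh_eq_sinh_div_cosh]
    field_simp
    linear_combination -6 * cosh_sq_sub_sinh_sq t
  have hcont : Continuous fun t => catenoidSupport t * cosh t ^ 2 :=
    (continuous_iff_continuousAt.2 fun t => (hasDerivAt_catenoidSupport t).continuousAt).mul
      (by fun_prop)
  rw [intervalIntegral.integral_eq_sub_of_hasDerivAt (fun t _ => hF t)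
    (hcont.intervalIntegrable _ _)]
  simp only [F, sinh_neg, cosh_neg]
  ring

lemma integral_catenoidSupport_mul_cosh_sq_of_cosh_eq {T : ℝ} (hT : cosh T = T * sinh T) :
    ∫ t in (-T)..T, catenoidSupport t * cosh t ^ 2 = T * cosh T ^ 2 / 2 := by
  rw [integral_catenoidSupport_mul_cosh_sq]
  linear_combination (3 / 2 * sinh T) * hT - 3 * T / 2 * cosh_sq_sub_sinh_sq T

theorem critical_catenoid_typeII_witness
    (T : ℝ) (hT : 0 < T) (hTeq : Real.cosh T = T * Real.sinh T)
    (a : ℝ) (ha : a = -(Real.tanh T ^ 2))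
    (u : ℝ → ℝ) (hu : u = fun t => a * (1 - t * Real.tanh t)) :
    (∀ t : ℝ, deriv (deriv u) t + (2 / Real.cosh t ^ 2) * u t = 0) ∧
    (T * deriv u T - u T = 1) ∧
    (∫ t in (-T)..T, u t * Real.cosh t ^ 2) < 0 := by
  obtain rfl : u = fun t => a * catenoidSupport t := hu
  have hTtanh := mul_tanh_eq_one_of_cosh_eq hTeq
  refine ⟨fun t => ?_, ?_, ?_⟩
  · simp only [deriv_const_mul_field', deriv_deriv_catenoidSupport]
    ring
  · simp only [deriv_const_mul_field']
    subst ha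
    linear_combination -tanh T ^ 2 * mul_deriv_catenoidSupport_sub_of_cosh_eq hTeq
      + (1 + T * tanh T) * hTtanh
  · have ha_neg : a < 0 := by
      have : tanh T ≠ 0 := right_ne_zero_of_mul_eq_one hTtanh
      rw [ha]; exact neg_neg_of_pos (by positivity)
    simp only [mul_assoc, intervalIntegral.integral_const_mul,
      integral_catenoidSupport_mul_cosh_sq_of_cosh_eq hTeq]
    exact mul_neg_of_neg_of_pos ha_neg (by positivity)
end
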